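/- Let Y = [n]^d with n ≥ 3, d ≥ 1, and let Λ be the family of all axis-aligned boxes {y ∈ Y : ∀ i < d, a_i ≤ y_i ≤ b_i} for a, b ∈ Y. Then the pivot dimension of Λ equals 2. -/

import Mathlib

/-- A `Y`-lattice: a family of subsets of `Y` containing `Y` itself and closed
under binary intersections. -/
def IsYLattice {Y : Type} (L : Set (Set Y)) : Prop :=
  Set.univ ∈ L ∧ ∀ A ∈ L, ∀ B ∈ L, A ∩ B ∈ L

/-- The `Λ`-hull of `A`: the intersection of all members of `Λ` containing `A`. -/
def latHull {Y : Type} (L : Set (Set Y)) (A : Set Y) : Set Y :=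
  ⋂₀ {B | B ∈ L ∧ A ⊆ B}

/-- The `Λ`-complexity of `A`: minimal cardinality of `B ⊆ A` with `A ⊆ hull(B)`. -/
noncomputable def latComplexity {Y : Type} (L : Set (Set Y)) (A : Set Y) : ℕ :=
  sInf {n : ℕ | ∃ B : Set Y, B ⊆ A ∧ B.ncard = n ∧ A ⊆ latHull L B}

/-- The pivot dimension of `Λ`: maximal `Λ`-complexity of an element of `Λ`. -/
noncomputable def PDim {Y : Type} (L : Set (Set Y)) : ℕ :=
  sSup {n : ℕ | ∃ A ∈ L, n = latComplexity L A}

/-- `Λ` shatters `S` if every subset of `S` is a trace `S ∩ C` for some `C ∈ Λ`. -/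
def Shatters {Y : Type} (L : Set (Set Y)) (S : Set Y) : Prop :=
  ∀ B ⊆ S, ∃ C ∈ L, S ∩ C = B

/-- VC dimension of the family `Λ`. -/
noncomputable def VCdim {Y : Type} (L : Set (Set Y)) : ℕ :=
  sSup {n : ℕ | ∃ S : Set Y, Shatters L S ∧ S.ncard = n}

/-- `Λ(H)`: the minimal `Y`-lattice containing every value `h x` for `h ∈ H`. -/
def LamH {X Y : Type} (H : Set (X → Set Y)) : Set (Set Y) :=
  {A | ∀ L : Set (Set Y), IsYLattice L → (∀ h ∈ H, ∀ x : X, h x ∈ L) → A ∈ L}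

/-- The family of axis-aligned boxes in `[n]^d` (including the empty box). -/
def boxFam (d n : ℕ) : Set (Set (Fin d → Fin n)) :=
  {S | ∃ a b : Fin d → Fin n, S = {y : Fin d → Fin n | ∀ i : Fin d, a i ≤ y i ∧ y i ≤ b i}}
/-!
An interval `[a, b]` is the hull of its two endpoints, since any interval containing `a` and `b`
contains everything between them; so every interval has complexity at most 2. Conversely,
singletons are intervals, so a set of at most one point `x` has hull inside `{x}` and cannot
generate an interval `[a, b]` with `a < b`. Boxes in `[n]^d` are exactly the intervals of the
product order.
-/

section Hull

variable {Y : Type} {L : Set (Set Y)} {A B : Set Y}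

theorem mem_latHull_iff {y : Y} : y ∈ latHull L B ↔ ∀ C ∈ L, B ⊆ C → y ∈ C :=
  ⟨fun h C hC hBC => h C ⟨hC, hBC⟩, fun h C hC => h C hC.1 hC.2⟩

theorem latHull_subset_of_mem (hB : B ∈ L) : latHull L B ⊆ B :=
  Set.sInter_subset_of_mem ⟨hB, subset_rfl⟩

theorem latHull_mono (hAB : A ⊆ B) : latHull L A ⊆ latHull L B :=
  Set.sInter_subset_sInter fun _ ⟨hC, hBC⟩ => ⟨hC, hAB.trans hBC⟩

theorem latComplexity_le_ncard (hBA : B ⊆ A) (hAB : A ⊆ latHull L B) :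
    latComplexity L A ≤ B.ncard :=
  Nat.sInf_le ⟨B, hBA, rfl, hAB⟩

theorem le_latComplexity {k : ℕ} (h : ∀ B ⊆ A, A ⊆ latHull L B → k ≤ B.ncard) :
    k ≤ latComplexity L A :=
  le_csInf ⟨_, A, subset_rfl, rfl, Set.subset_sInter fun _ hC => hC.2⟩
    fun _ ⟨B, hBA, hB, hAB⟩ => hB ▸ h B hBA hAB

theorem two_le_latComplexity (hsingleton : ∀ x, {x} ∈ L) (hA : A.Nontrivial)
    (hfin : A.Finite) : 2 ≤ latComplexity L A := by
  refine le_latComplexity fun B hBA hAB => ?_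
  by_contra! hlt
  obtain ⟨x, hBx⟩ : ∃ x, B ⊆ {x} := by
    rcases (Set.ncard_le_one_iff_eq (hfin.subset hBA)).mp (by omega) with rfl | ⟨x, rfl⟩
    · exact ⟨hA.nonempty.some, Set.empty_subset _⟩
    · exact ⟨x, subset_rfl⟩
  exact hA.not_subset_singleton
    (hAB.trans ((latHull_mono hBx).trans (latHull_subset_of_mem (hsingleton x))))

theorem PDim_eq_of_forall_le {k : ℕ} (hle : ∀ A ∈ L, latComplexity L A ≤ k)
    (hmem : ∃ A ∈ L, latComplexity L A = k) : PDim L = k := by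
  obtain ⟨A, hA, hAk⟩ := hmem
  have hk : k ∈ {m | ∃ A ∈ L, m = latComplexity L A} := ⟨A, hA, hAk.symm⟩
  have hbdd : ∀ m ∈ {m | ∃ A ∈ L, m = latComplexity L A}, m ≤ k := by
    rintro _ ⟨A, hA, rfl⟩
    exact hle A hA
  exact le_antisymm (csSup_le ⟨k, hk⟩ hbdd) (le_csSup ⟨k, hbdd⟩ hk)

end Hull

section Intervals

variable {α : Type}

def closedIntervals (α : Type) [Preorder α] : Set (Set α) :=
  {S | ∃ a b : α, S = Set.Icc a b}

theorem Icc_subset_latHull_pair [Preorder α] (a b : α) :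
    Set.Icc a b ⊆ latHull (closedIntervals α) {a, b} := by
  intro y hy
  rw [mem_latHull_iff]
  rintro _ ⟨c, e, rfl⟩ hab
  exact Set.Icc_subset_Icc (hab (Set.mem_insert a {b})).1
    (hab (Set.mem_insert_of_mem a rfl)).2 hy

theorem latComplexity_Icc_le_two [Preorder α] (a b : α) :
    latComplexity (closedIntervals α) (Set.Icc a b) ≤ 2 := by
  by_cases hab : a ≤ b
  · calc latComplexity (closedIntervals α) (Set.Icc a b) ≤ ({a, b} : Set α).ncard :=
          latComplexity_le_ncard (Set.insert_subset_iff.mpr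
            ⟨Set.left_mem_Icc.mpr hab, Set.singleton_subset_iff.mpr (Set.right_mem_Icc.mpr hab)⟩)
            (Icc_subset_latHull_pair a b)
      _ ≤ ({b} : Set α).ncard + 1 := Set.ncard_insert_le a {b}
      _ = 2 := by rw [Set.ncard_singleton]
  · calc latComplexity (closedIntervals α) (Set.Icc a b) ≤ (∅ : Set α).ncard :=
          latComplexity_le_ncard (Set.empty_subset _)
            (by rw [Set.Icc_eq_empty hab]; exact Set.empty_subset _)
      _ ≤ 2 := by simp

theorem PDim_closedIntervals [PartialOrder α] [LocallyFiniteOrder α] {a b : α}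
    (hab : a < b) : PDim (closedIntervals α) = 2 := by
  refine PDim_eq_of_forall_le (by rintro _ ⟨c, e, rfl⟩; exact latComplexity_Icc_le_two c e)
    ⟨Set.Icc a b, ⟨a, b, rfl⟩, le_antisymm (latComplexity_Icc_le_two a b) ?_⟩
  exact two_le_latComplexity (fun x => ⟨x, x, (Set.Icc_self x).symm⟩)
    ⟨a, Set.left_mem_Icc.mpr hab.le, b, Set.right_mem_Icc.mpr hab.le, hab.ne⟩ (Set.finite_Icc a b)

end Intervals

theorem boxFam_eq_closedIntervals (d n : ℕ) : boxFam d n = closedIntervals (Fin d → Fin n) := by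
  ext S
  simp [boxFam, closedIntervals, Set.Icc, Pi.le_def, forall_and]

/-- for `Y = [n]^d` with `n ≥ 3`, `d ≥ 1`, the pivot dimension of the
family of axis-aligned boxes equals 2. -/
theorem pivotDim_boxFam (d n : ℕ) (hd : 1 ≤ d) (hn : 3 ≤ n) :
    PDim (boxFam d n) = 2 := by
  have hlt : (fun _ => ⟨0, by omega⟩ : Fin d → Fin n) < fun _ => ⟨1, by omega⟩ :=
    Pi.lt_def.mpr ⟨fun _ => Fin.mk_le_mk.mpr zero_le_one, ⟨0, hd⟩, Fin.mk_lt_mk.mpr zero_lt_one⟩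
  rw [boxFam_eq_closedIntervals]
  exact PDim_closedIntervals hlt
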